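/- Let f : ℝ^m → ℝ^m be a C¹ diffeomorphism that has the Lipschitz shadowing property with constants 𝓛, d₀ > 0. Let p : ℤ → ℝ^m be a complete trajectory of f (i.e. p_{k+1} = f(p_k) for all k ∈ ℤ) and set A_k = Df(p_k). Assume there is a constant N > 0 with ‖A_k‖ ≤ N for all k ∈ ℤ, and that f is uniformly differentiable along the trajectory: for every μ > 0 there exists δ > 0 such that for all k ∈ ℤ and all v ∈ ℝ^m with ‖v‖ ≤ δ one has ‖f(p_k + v) − p_{k+1} − A_k v‖ ≤ μ‖v‖. Then for any sequence {w_k ∈ ℝ^m, k ∈ ℤ} with ‖w_k‖ < 1 for all k ∈ ℤ, there exists a sequence {v_k ∈ ℝ^m, k ∈ ℤ} such that ‖v_k‖ ≤ 8𝓛 + 1 and v_{k+1} = A_k v_k + w_k for all k ∈ ℤ. -/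

import Mathlib

/-!
On a window `[a, b)`, let `z` solve `z_{k+1} = A_k z_k + w_k` from `z_a = 0`. For small `d`, the
sequence `x_k = p_k + d z_k` (for `k ≤ b`, continued by the orbit of `f` afterwards) is a
`2d`-pseudotrajectory by uniform differentiability along `p`, hence is `2Ld`-shadowed by an orbit
`q`. The sequence `(x - q) / d` is bounded by `2L`, and since `q - p` is `O(d)`, uniform
differentiability again shows that it solves the linear equation on the window up to an error
that can be made arbitrarily small. As the windows exhaust `ℤ` and the errors tend to `0`, a
cluster point of these sequences in the compact product of closed balls of radius `2L` is an
exact bounded solution.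
-/

open Filter Topology

/-- `f` has the Lipschitz shadowing property with constants `L`, `d₀`: every
`d`-pseudotrajectory with `0 < d ≤ d₀` is `L·d`-shadowed by a complete trajectory of `f`. -/
def LipschitzShadowing {m : ℕ} (f : EuclideanSpace ℝ (Fin m) → EuclideanSpace ℝ (Fin m))
    (L d₀ : ℝ) : Prop :=
  ∀ d : ℝ, 0 < d → d ≤ d₀ →
    ∀ x : ℤ → EuclideanSpace ℝ (Fin m),
      (∀ k : ℤ, ‖x (k + 1) - f (x k)‖ < d) →
      ∃ q : ℤ → EuclideanSpace ℝ (Fin m),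
        (∀ k : ℤ, q (k + 1) = f (q k)) ∧ ∀ k : ℤ, ‖x k - q k‖ ≤ L * d

theorem exists_forward_extension {α : Type*} (u : ℤ → α) (F : ℤ → α → α) (a : ℤ) :
    ∃ z : ℤ → α, (∀ k ≤ a, z k = u k) ∧ ∀ k, a ≤ k → z (k + 1) = F k (z k) := by
  let y : ℕ → α := fun i => Nat.rec (u a) (fun j yj => F (a + j) yj) i
  have hy : ∀ k, a ≤ k → y (k + 1 - a).toNat = F k (y (k - a).toNat) := by
    intro k hk
    rw [show (k + 1 - a).toNat = (k - a).toNat + 1 by omega]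
    show F (a + (k - a).toNat) _ = _
    rw [show a + ((k - a).toNat : ℤ) = k by omega]
  have hya : y (a - a).toNat = u a := by rw [sub_self]; rfl
  refine ⟨fun k => if k ≤ a then u k else y (k - a).toNat, fun k hk => if_pos hk, fun k hk => ?_⟩
  have hz : (if k ≤ a then u k else y (k - a).toNat) = y (k - a).toNat := by
    split_ifs with h
    · rw [show k = a by omega, hya]
    · rfl
  simp only [if_neg (show ¬ k + 1 ≤ a by omega), hz]
  exact hy k hk

section Linearization

variable {E : Type*} [NormedAddCommGroup E] [NormedSpace ℝ E]

def linearizationRemainder (f : E → E) (p : ℤ → E) (A : ℤ → E →L[ℝ] E) (k : ℤ) (u : E) : E :=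
  f (p k + u) - p (k + 1) - A k u

variable {f : E → E} {p : ℤ → E} {A : ℤ → E →L[ℝ] E}

theorem perturbation_step_defect_eq {z w : ℤ → E} {k : ℤ} (hz : z (k + 1) = A k (z k) + w k)
    (d : ℝ) :
    p (k + 1) + d • z (k + 1) - f (p k + d • z k) =
      d • w k - linearizationRemainder f p A k (d • z k) := by
  simp only [linearizationRemainder, hz, smul_add, map_smul]
  abel

theorem orbit_sub_eq_linear_add_remainder {q : ℤ → E} {k : ℤ} (hq : q (k + 1) = f (q k)) :
    q (k + 1) - p (k + 1) = A k (q k - p k) + linearizationRemainder f p A k (q k - p k) := by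
  simp only [linearizationRemainder, hq, add_sub_cancel]

theorem norm_perturbed_step_lt (hp : ∀ k, p (k + 1) = f (p k)) {w z : ℤ → E}
    (hw : ∀ k, ‖w k‖ < 1) {a b : ℤ} (hz0 : ∀ k ≤ a, z k = 0)
    (hz : ∀ k, a ≤ k → z (k + 1) = A k (z k) + w k) {B : ℝ} (hB : ∀ k ≤ b, ‖z k‖ ≤ B)
    {μ δ : ℝ} (hμ : 0 ≤ μ)
    (hR : ∀ k u, ‖u‖ ≤ δ → ‖linearizationRemainder f p A k u‖ ≤ μ * ‖u‖)
    {d : ℝ} (hd : 0 < d) (hdB : d * B ≤ δ) (hμB : μ * B ≤ 1) {x : ℤ → E}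
    (hxz : ∀ k ≤ b, x k = p k + d • z k) (hxf : ∀ k, b ≤ k → x (k + 1) = f (x k)) (k : ℤ) :
    ‖x (k + 1) - f (x k)‖ < 2 * d := by
  rcases le_or_gt b k with hbk | hkb
  · rw [hxf k hbk, sub_self, norm_zero]
    positivity
  rcases lt_or_ge k a with hka | hak
  · rw [hxz k hkb.le, hxz (k + 1) hkb, hz0 k hka.le, hz0 (k + 1) hka, smul_zero, add_zero,
      add_zero, hp, sub_self, norm_zero]
    positivity
  have hdz : ‖d • z k‖ ≤ d * B := by
    rw [norm_smul, Real.norm_of_nonneg hd.le]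
    exact mul_le_mul_of_nonneg_left (hB k hkb.le) hd.le
  rw [hxz k hkb.le, hxz (k + 1) hkb, perturbation_step_defect_eq (hz k hak)]
  calc ‖d • w k - linearizationRemainder f p A k (d • z k)‖
      ≤ ‖d • w k‖ + ‖linearizationRemainder f p A k (d • z k)‖ := norm_sub_le _ _
    _ < d * 1 + μ * (d * B) := by
      refine add_lt_add_of_lt_of_le ?_ ((hR k _ (hdz.trans hdB)).trans
        (mul_le_mul_of_nonneg_left hdz hμ))
      rw [norm_smul, Real.norm_of_nonneg hd.le]
      exact mul_lt_mul_of_pos_left (hw k) hd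
    _ ≤ 2 * d := by nlinarith

end Linearization

section Shadowing

variable {m : ℕ} {f : EuclideanSpace ℝ (Fin m) → EuclideanSpace ℝ (Fin m)} {L d₀ : ℝ}
  {p w : ℤ → EuclideanSpace ℝ (Fin m)}
  {A : ℤ → EuclideanSpace ℝ (Fin m) →L[ℝ] EuclideanSpace ℝ (Fin m)}

theorem LipschitzShadowing.exists_approx_solution_of_perturbation
    (hshadow : LipschitzShadowing f L d₀) (hL : 0 ≤ L) (hp : ∀ k, p (k + 1) = f (p k))
    (hw : ∀ k, ‖w k‖ < 1) {z : ℤ → EuclideanSpace ℝ (Fin m)} {a b : ℤ}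
    (hz0 : ∀ k ≤ a, z k = 0) (hz : ∀ k, a ≤ k → z (k + 1) = A k (z k) + w k)
    {B : ℝ} (hB : ∀ k ≤ b, ‖z k‖ ≤ B) {μ δ : ℝ} (hμ : 0 ≤ μ)
    (hR : ∀ k u, ‖u‖ ≤ δ → ‖linearizationRemainder f p A k u‖ ≤ μ * ‖u‖)
    {d : ℝ} (hd : 0 < d) (hdd₀ : 2 * d ≤ d₀) (hdδ : d * (2 * L + B) ≤ δ) (hμB : μ * B ≤ 1) :
    ∃ v : ℤ → EuclideanSpace ℝ (Fin m), (∀ k, ‖v k‖ ≤ 2 * L) ∧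
      ∀ k, a ≤ k → k < b → ‖v (k + 1) - A k (v k) - w k‖ ≤ μ * (2 * L + B) := by
  obtain ⟨x, hxz, hxf⟩ := exists_forward_extension (fun k => p k + d • z k) (fun _ => f) b
  obtain ⟨q, hq, hxq⟩ := hshadow (2 * d) (by positivity) hdd₀ x
    (norm_perturbed_step_lt hp hw hz0 hz hB hμ hR hd (by nlinarith) hμB hxz hxf)
  refine ⟨fun k => d⁻¹ • (x k - q k), fun k => ?_, fun k hak hkb => ?_⟩
  · rw [norm_smul, norm_inv, Real.norm_of_nonneg hd.le, inv_mul_le_iff₀ hd]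
    linarith [hxq k]
  have hqp : ‖q k - p k‖ ≤ d * (2 * L + B) :=
    calc ‖q k - p k‖ = ‖d • z k - (x k - q k)‖ := by rw [hxz k hkb.le]; congr 1; abel
      _ ≤ d * B + L * (2 * d) := by
        refine norm_sub_le_of_le ?_ (hxq k)
        rw [norm_smul, Real.norm_of_nonneg hd.le]
        exact mul_le_mul_of_nonneg_left (hB k hkb.le) hd.le
      _ = d * (2 * L + B) := by ring
  have hres : d⁻¹ • (x (k + 1) - q (k + 1)) - A k (d⁻¹ • (x k - q k)) - w k =
      -(d⁻¹ • linearizationRemainder f p A k (q k - p k)) := by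
    rw [show x (k + 1) - q (k + 1) = d • z (k + 1) - (q (k + 1) - p (k + 1)) by
        rw [hxz (k + 1) (by omega)]; abel,
      show x k - q k = d • z k - (q k - p k) by rw [hxz k hkb.le]; abel,
      orbit_sub_eq_linear_add_remainder (hq k), hz k hak]
    simp only [smul_sub, smul_add, map_sub, map_smul, smul_smul, inv_mul_cancel₀ hd.ne',
      one_smul]
    abel
  rw [hres, norm_neg, norm_smul, norm_inv, Real.norm_of_nonneg hd.le, inv_mul_le_iff₀ hd]
  calc ‖linearizationRemainder f p A k (q k - p k)‖ ≤ μ * ‖q k - p k‖ := hR k _ (hqp.trans hdδ)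
    _ ≤ μ * (d * (2 * L + B)) := mul_le_mul_of_nonneg_left hqp hμ
    _ = d * (μ * (2 * L + B)) := by ring

theorem LipschitzShadowing.exists_approx_solution (hshadow : LipschitzShadowing f L d₀)
    (hL : 0 < L) (hd₀ : 0 < d₀) (hp : ∀ k, p (k + 1) = f (p k))
    (hunif : ∀ μ : ℝ, 0 < μ → ∃ δ : ℝ, 0 < δ ∧
      ∀ k : ℤ, ∀ v : EuclideanSpace ℝ (Fin m), ‖v‖ ≤ δ →
        ‖f (p k + v) - p (k + 1) - A k v‖ ≤ μ * ‖v‖)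
    (hw : ∀ k, ‖w k‖ < 1) {ε : ℝ} (hε : 0 < ε) (hε1 : ε ≤ 1) (a b : ℤ) :
    ∃ v : ℤ → EuclideanSpace ℝ (Fin m), (∀ k, ‖v k‖ ≤ 2 * L) ∧
      ∀ k, a ≤ k → k < b → ‖v (k + 1) - A k (v k) - w k‖ ≤ ε := by
  obtain ⟨z, hz0, hz⟩ := exists_forward_extension (fun _ => 0) (fun k u => A k u + w k) a
  set B := ∑ k ∈ Finset.Icc a b, ‖z k‖
  have hB : ∀ k ≤ b, ‖z k‖ ≤ B := by
    intro k hkb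
    rcases lt_or_ge k a with hka | hak
    · rw [hz0 k hka.le, norm_zero]
      positivity
    · exact Finset.single_le_sum (fun _ _ => norm_nonneg _) (Finset.mem_Icc.2 ⟨hak, hkb⟩)
  have hLB : 0 < 2 * L + B := by positivity
  obtain ⟨δ, hδ, hR⟩ := hunif (ε / (2 * L + B)) (by positivity)
  set d := min (d₀ / 2) (δ / (2 * L + B))
  have hdδ : d * (2 * L + B) ≤ δ := (le_div_iff₀ hLB).1 (min_le_right _ _)
  have hμB : ε / (2 * L + B) * B ≤ 1 := by
    rw [div_mul_eq_mul_div, div_le_one hLB]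
    nlinarith [Finset.sum_nonneg fun k (_ : k ∈ Finset.Icc a b) => norm_nonneg (z k)]
  obtain ⟨v, hv, hres⟩ := hshadow.exists_approx_solution_of_perturbation hL.le hp hw hz0 hz hB
    (by positivity) hR (by positivity) (by linarith [min_le_left (d₀ / 2) (δ / (2 * L + B))])
    hdδ hμB
  exact ⟨v, hv, fun k hak hkb => (hres k hak hkb).trans_eq (div_mul_cancel₀ _ hLB.ne')⟩

end Shadowing

theorem IsCompact.exists_mem_forall_eq_of_tendsto {X Y ι : Type*} [TopologicalSpace X]
    [TopologicalSpace Y] [T2Space Y] {K : Set X} (hK : IsCompact K) {x : ℕ → X}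
    (hxK : ∀ n, x n ∈ K) {φ : ι → X → Y} (hφ : ∀ i, Continuous (φ i)) {y : ι → Y}
    (hlim : ∀ i, Tendsto (fun n => φ i (x n)) atTop (𝓝 (y i))) :
    ∃ z ∈ K, ∀ i, φ i z = y i := by
  obtain ⟨z, hzK, hz⟩ := hK.exists_mapClusterPt (f := atTop) (u := x)
    (tendsto_principal.2 (Eventually.of_forall hxK))
  exact ⟨z, hzK, fun i => eq_of_nhds_neBot
    ((hz.continuousAt_comp (hφ i).continuousAt).clusterPt.mono (hlim i))⟩

theorem exists_bounded_solution_of_approx {E : Type*} [NormedAddCommGroup E] [NormedSpace ℝ E]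
    [ProperSpace E] {A : ℤ → E →L[ℝ] E} {w : ℤ → E} {R : ℝ}
    (h : ∀ n : ℕ, ∃ v : ℤ → E, (∀ k, ‖v k‖ ≤ R) ∧
      ∀ k, -(n : ℤ) ≤ k → k < n → ‖v (k + 1) - A k (v k) - w k‖ ≤ 1 / (n + 1)) :
    ∃ v : ℤ → E, (∀ k, ‖v k‖ ≤ R) ∧ ∀ k, v (k + 1) = A k (v k) + w k := by
  choose vs hvsR hvs using h
  have hK : IsCompact (Set.univ.pi fun _ : ℤ => Metric.closedBall (0 : E) R) :=
    isCompact_univ_pi fun _ => isCompact_closedBall _ _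
  have hlim : ∀ k, Tendsto (fun n => vs n (k + 1) - A k (vs n k)) atTop (𝓝 (w k)) := by
    intro k
    rw [tendsto_iff_norm_sub_tendsto_zero]
    refine squeeze_zero' (Eventually.of_forall fun _ => norm_nonneg _) ?_
      tendsto_one_div_add_atTop_nhds_zero_nat
    filter_upwards [eventually_ge_atTop (k.natAbs + 1)] with n hn
    exact hvs n k (by omega) (by omega)
  obtain ⟨v, hvK, hv⟩ := hK.exists_mem_forall_eq_of_tendsto (fun n => by simpa using hvsR n)
    (φ := fun k u => u (k + 1) - A k (u k)) (fun k => by fun_prop) hlim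
  exact ⟨v, fun k => by simpa using hvK k trivial, fun k => sub_eq_iff_eq_add'.1 (hv k)⟩

theorem lemma1_bounded_solution_general
    {m : ℕ} (f : EuclideanSpace ℝ (Fin m) → EuclideanSpace ℝ (Fin m))
    (L d₀ : ℝ) (hL : 0 < L) (hd₀ : 0 < d₀) (hshadow : LipschitzShadowing f L d₀)
    (p : ℤ → EuclideanSpace ℝ (Fin m)) (hp : ∀ k : ℤ, p (k + 1) = f (p k))
    (A : ℤ → (EuclideanSpace ℝ (Fin m) →L[ℝ] EuclideanSpace ℝ (Fin m)))
    (hunif : ∀ μ : ℝ, 0 < μ → ∃ δ : ℝ, 0 < δ ∧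
      ∀ k : ℤ, ∀ v : EuclideanSpace ℝ (Fin m), ‖v‖ ≤ δ →
        ‖f (p k + v) - p (k + 1) - A k v‖ ≤ μ * ‖v‖)
    (w : ℤ → EuclideanSpace ℝ (Fin m)) (hw : ∀ k : ℤ, ‖w k‖ < 1) :
    ∃ v : ℤ → EuclideanSpace ℝ (Fin m),
      (∀ k : ℤ, ‖v k‖ ≤ 8 * L + 1) ∧
      ∀ k : ℤ, v (k + 1) = A k (v k) + w k := by
  obtain ⟨v, hv, hsol⟩ := exists_bounded_solution_of_approx fun n : ℕ =>
    hshadow.exists_approx_solution hL hd₀ hp hunif hw (ε := 1 / (n + 1)) (by positivity)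
      (div_le_one_of_le₀ (by linarith [n.cast_nonneg (α := ℝ)]) (by positivity)) (-n) n
  exact ⟨v, fun k => (hv k).trans (by linarith), hsol⟩

/-- **Lemma 1 of Pilyugin–Tikhomirov.** If a C¹ diffeomorphism `f` has the Lipschitz
shadowing property with constants `L, d₀`, then along any trajectory `{p_k}`, for any
sequence `{w_k}` with `‖w_k‖ < 1` there is a sequence `{v_k}` with `‖v_k‖ ≤ 8L + 1`
solving `v_{k+1} = A_k v_k + w_k` for all `k ∈ ℤ`, where `A_k = Df(p_k)`. -/
theorem lemma1_bounded_solution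
    {m : ℕ} (f g : EuclideanSpace ℝ (Fin m) → EuclideanSpace ℝ (Fin m))
    (hf : ContDiff ℝ 1 f) (hg : ContDiff ℝ 1 g)
    (hgf : Function.LeftInverse g f) (hfg : Function.RightInverse g f)
    (L d₀ : ℝ) (hL : 0 < L) (hd₀ : 0 < d₀) (hshadow : LipschitzShadowing f L d₀)
    (p : ℤ → EuclideanSpace ℝ (Fin m)) (hp : ∀ k : ℤ, p (k + 1) = f (p k))
    (A : ℤ → (EuclideanSpace ℝ (Fin m) →L[ℝ] EuclideanSpace ℝ (Fin m)))
    (hA : ∀ k : ℤ, A k = fderiv ℝ f (p k))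
    (N : ℝ) (hN : 0 < N) (hAbound : ∀ k : ℤ, ‖A k‖ ≤ N)
    (hunif : ∀ μ : ℝ, 0 < μ → ∃ δ : ℝ, 0 < δ ∧
      ∀ k : ℤ, ∀ v : EuclideanSpace ℝ (Fin m), ‖v‖ ≤ δ →
        ‖f (p k + v) - p (k + 1) - A k v‖ ≤ μ * ‖v‖)
    (w : ℤ → EuclideanSpace ℝ (Fin m)) (hw : ∀ k : ℤ, ‖w k‖ < 1) :
    ∃ v : ℤ → EuclideanSpace ℝ (Fin m),
      (∀ k : ℤ, ‖v k‖ ≤ 8 * L + 1) ∧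
      ∀ k : ℤ, v (k + 1) = A k (v k) + w k :=
  lemma1_bounded_solution_general f L d₀ hL hd₀ hshadow p hp A hunif w hw
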